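/- arXiv:2311.04363 — 2 statements merged into one kernel-verified Lean document; each statement's English description precedes it below -/
import Mathlib

section
/- Let K be a field with a non-Archimedean absolute value. Let f_1, …, f_n : K → K be functions and B_{r_1}(a_1), …, B_{r_n}(a_n) pairwise disjoint closed balls with δ_i = min_{j≠i} |a_i - a_j|. Suppose |f_j(z)| ≤ 1 for all z in the union of the balls and all j. Let τ > 0, and for each i choose c_i ∈ K with |c_i| = √(r_i δ_i) and M_i ≥ 1 with (r_i/δ_i)^(M_i/2) < τ; set h_i(z) = 1/(1 - ((z-a_i)/c_i)^{M_i}) and F(z) = Σ_{i=1}^n f_i(z) h_i(z). Then for every i and every z ∈ B_{r_i}(a_i), |F(z) - f_i(z)| < τ. -/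
/-- Ultrametric: if `v x < v y` then `v (x + y) = v y`. -/
lemma stmt6_add_eq {K : Type*} [Field K] (v : AbsoluteValue K ℝ)
    (hna : IsNonarchimedean v) {x y : K} (h : v x < v y) : v (x + y) = v y := by
  refine le_antisymm ((hna x y).trans (max_le h.le le_rfl)) ?_
  by_contra hlt
  push_neg at hlt
  have h2 : v y = v ((x + y) + (-x)) := by ring_nf
  have h3 := hna (x + y) (-x)
  rw [v.map_neg] at h3
  have := h2 ▸ h3
  rcases max_cases (v (x + y)) (v x) with ⟨he, _⟩ | ⟨he, _⟩ <;> rw [he] at this <;> linarith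

/-- Ultrametric sum bound. -/
lemma stmt6_sum_lt {K : Type*} [Field K] (v : AbsoluteValue K ℝ)
    (hna : IsNonarchimedean v) {ι : Type*} (s : Finset ι) (g : ι → K) {τ : ℝ} (hτ : 0 < τ)
    (h : ∀ j ∈ s, v (g j) < τ) : v (∑ j ∈ s, g j) < τ := by
  classical
  induction s using Finset.cons_induction with
  | empty => simpa using hτ
  | cons a s ha ih =>
    rw [Finset.sum_cons]
    refine lt_of_le_of_lt (hna _ _) (max_lt (h a (Finset.mem_cons_self a s)) ?_)
    exact ih fun j hj => h j (Finset.mem_cons_of_mem hj)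

lemma stmt6_sqrt_pow (x : ℝ) (hx : 0 ≤ x) (M : ℕ) :
    Real.sqrt x ^ M = x ^ ((M : ℝ) / 2) := by
  rw [Real.sqrt_eq_rpow, ← Real.rpow_natCast (x ^ (1/2 : ℝ)) M, ← Real.rpow_mul hx]
  ring_nf

lemma stmt6_ratio1 {r δ : ℝ} (hr : 0 < r) (hδ : 0 < δ) :
    r / Real.sqrt (r * δ) = Real.sqrt (r / δ) := by
  have h1 : Real.sqrt r ≠ 0 := by positivity
  have h2 : Real.sqrt δ ≠ 0 := by positivity
  rw [Real.sqrt_mul hr.le, Real.sqrt_div hr.le]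
  rw [div_eq_div_iff (by positivity) h2]
  nlinarith [Real.mul_self_sqrt hr.le, Real.sqrt_nonneg r, Real.sqrt_nonneg δ]

lemma stmt6_ratio2 {r δ : ℝ} (hr : 0 < r) (hδ : 0 < δ) :
    Real.sqrt (r * δ) / δ = Real.sqrt (r / δ) := by
  have h2 : Real.sqrt δ ≠ 0 := by positivity
  rw [Real.sqrt_mul hr.le, Real.sqrt_div hr.le]
  rw [div_eq_div_iff hδ.ne' h2]
  nlinarith [Real.mul_self_sqrt hδ.le, Real.sqrt_nonneg r, Real.sqrt_nonneg δ]

lemma stmt6_ratio3 {r δ : ℝ} (hr : 0 < r) (hδ : 0 < δ) :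
    δ / Real.sqrt (r * δ) = Real.sqrt (δ / r) := by
  have h := stmt6_ratio1 hr hδ
  have hs : (0:ℝ) < Real.sqrt (r * δ) := Real.sqrt_pos.2 (by positivity)
  rw [show δ / r = (r / δ)⁻¹ by rw [inv_div], Real.sqrt_inv, ← h]
  field_simp
  nlinarith [Real.mul_self_sqrt hr.le, Real.mul_self_sqrt hδ.le, Real.sqrt_nonneg r, Real.sqrt_nonneg δ, Real.sq_sqrt (by positivity : (0:ℝ) ≤ δ * r)]

/-- The approximation estimate of Theorem 4.2: the glued function
`F = Σ f_j · h_j` is uniformly `τ`-close to `f_i` on the `i`-th ball. -/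
theorem stmt6 {K : Type*} [Field K] (v : AbsoluteValue K ℝ)
    (hna : IsNonarchimedean v) (n : ℕ) (hn : 1 ≤ n)
    (a : Fin n → K) (r δ : Fin n → ℝ) (hr : ∀ i, 0 < r i)
    (hdisj : ∀ i j, i ≠ j → ∀ z : K, v (z - a i) ≤ r i → ¬ (v (z - a j) ≤ r j))
    (hδ1 : ∀ i j, j ≠ i → δ i ≤ v (a i - a j))
    (hδ2 : ∀ i, ∃ j, j ≠ i ∧ δ i = v (a i - a j))
    (f : Fin n → K → K)
    (hbd : ∀ i j, ∀ z : K, v (z - a i) ≤ r i → v (f j z) ≤ 1)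
    (τ : ℝ) (hτ : 0 < τ)
    (c : Fin n → K) (hc : ∀ i, v (c i) = Real.sqrt (r i * δ i))
    (M : Fin n → ℕ) (hM : ∀ i, 1 ≤ M i)
    (hMτ : ∀ i, (r i / δ i) ^ ((M i : ℝ) / 2) < τ) :
    ∀ i, ∀ z : K, v (z - a i) ≤ r i →
      v ((∑ j, f j z * (1 - ((z - a j) / c j) ^ (M j))⁻¹) - f i z) < τ := by
  intro i z hz
  -- distance between centers exceeds radii
  have hball : ∀ k l, k ≠ l → r k < v (a k - a l) := by
    intro k l hkl
    by_contra h
    push_neg at h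
    have h1 : v (a l - a k) ≤ r k := by rw [v.map_sub]; exact h
    refine hdisj k l hkl (a l) h1 ?_
    simp [(hr l).le]
  have hrδ : ∀ k, r k < δ k := by
    intro k
    obtain ⟨l, hlk, he⟩ := hδ2 k
    rw [he]; exact hball k l (Ne.symm hlk)
  have hδpos : ∀ k, 0 < δ k := fun k => (hr k).trans (hrδ k)
  -- rewrite the difference as a sum of small terms
  have hsum : (∑ j, f j z * (1 - ((z - a j) / c j) ^ (M j))⁻¹) - f i z
      = ∑ j, (f j z * (1 - ((z - a j) / c j) ^ (M j))⁻¹ - if j = i then f i z else 0) := by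
    rw [Finset.sum_sub_distrib]
    congr 1
    simp
  rw [hsum]
  refine stmt6_sum_lt v hna _ _ hτ ?_
  intro j _
  by_cases hji : j = i
  · -- the main term
    subst hji
    rw [if_pos rfl]
    have hrj := hr j
    have hδj0 := hδpos j
    set u : K := ((z - a j) / c j) ^ (M j) with hu
    have hvu : v u ≤ (r j / δ j) ^ ((M j : ℝ) / 2) := by
      have h1 : v u = (v (z - a j) / v (c j)) ^ (M j) := by
        rw [hu, map_pow, map_div₀]
      rw [h1, hc j, ← stmt6_sqrt_pow _ (by positivity), ← stmt6_ratio1 (hr j) (hδpos j)]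
      have hs : (0:ℝ) < Real.sqrt (r j * δ j) := Real.sqrt_pos.2 (by positivity)
      gcongr
    have hvu1 : v u < 1 := by
      refine lt_of_le_of_lt hvu ?_
      exact Real.rpow_lt_one (by positivity) ((div_lt_one hδj0).2 (hrδ j))
        (div_pos (Nat.cast_pos.2 (hM j)) two_pos)
    have h1u : v (1 - u) = 1 := by
      have : (1 : K) - u = (-u) + 1 := by ring
      rw [this, stmt6_add_eq v hna (by rw [v.map_neg, v.map_one]; exact hvu1), v.map_one]
    have hne : (1 : K) - u ≠ 0 := v.ne_zero_iff.1 (by rw [h1u]; norm_num)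
    have hrw : f j z * (1 - u)⁻¹ - f j z = f j z * u * (1 - u)⁻¹ := by
      field_simp
      ring
    rw [hrw]
    have : v (f j z * u * (1 - u)⁻¹) = v (f j z) * v u * (v (1 - u))⁻¹ := by
      rw [map_mul, map_mul, map_inv₀]
    rw [this, h1u, inv_one, mul_one]
    calc v (f j z) * v u ≤ 1 * ((r j / δ j) ^ ((M j : ℝ) / 2)) :=
          mul_le_mul (hbd j j z hz) hvu (v.nonneg _) one_pos.le
      _ = (r j / δ j) ^ ((M j : ℝ) / 2) := one_mul _
      _ < τ := hMτ j
  · -- the other terms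
    rw [if_neg hji, sub_zero]
    have hrj := hr j
    have hδj0 := hδpos j
    have hij : i ≠ j := Ne.symm hji
    have hza : v (z - a j) = v (a i - a j) := by
      have h1 : z - a j = (z - a i) + (a i - a j) := by ring
      rw [h1, stmt6_add_eq v hna (lt_of_le_of_lt hz (hball i j hij))]
    have hδj : δ j ≤ v (z - a j) := by
      rw [hza, ← v.map_sub]
      exact hδ1 j i hij
    set u : K := ((z - a j) / c j) ^ (M j) with hu
    have hvu : Real.sqrt (δ j / r j) ^ (M j) ≤ v u := by
      have h1 : v u = (v (z - a j) / v (c j)) ^ (M j) := by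
        rw [hu, map_pow, map_div₀]
      rw [h1, hc j, ← stmt6_ratio3 (hr j) (hδpos j)]
      have hs : (0:ℝ) < Real.sqrt (r j * δ j) := Real.sqrt_pos.2 (by positivity)
      gcongr
    have hone : 1 < v u := by
      refine lt_of_lt_of_le ?_ hvu
      refine one_lt_pow₀ ?_ (Nat.one_le_iff_ne_zero.mp (hM j))
      rw [show (1:ℝ) = Real.sqrt 1 by simp]
      exact Real.sqrt_lt_sqrt (by norm_num) ((one_lt_div (hr j)).2 (hrδ j))
    have h1u : v (1 - u) = v u := by
      have : (1 : K) - u = 1 + (-u) := by ring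
      rw [this, stmt6_add_eq v hna (by rw [v.map_neg, v.map_one]; exact hone), v.map_neg]
    have hinv : v ((1 - u)⁻¹) ≤ (r j / δ j) ^ ((M j : ℝ) / 2) := by
      rw [map_inv₀, h1u]
      have h2 : (Real.sqrt (δ j / r j) ^ (M j))⁻¹ = (r j / δ j) ^ ((M j : ℝ) / 2) := by
        rw [← inv_pow, ← Real.sqrt_inv, inv_div, stmt6_sqrt_pow _ (by positivity)]
      rw [← h2]
      have hb : (0:ℝ) < Real.sqrt (δ j / r j) ^ M j := by positivity
      exact inv_anti₀ hb hvu
    calc v (f j z * (1 - u)⁻¹) = v (f j z) * v ((1 - u)⁻¹) := map_mul v _ _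
      _ ≤ 1 * ((r j / δ j) ^ ((M j : ℝ) / 2)) :=
          mul_le_mul (hbd i j z hz) hinv (v.nonneg _) one_pos.le
      _ = (r j / δ j) ^ ((M j : ℝ) / 2) := one_mul _
      _ < τ := hMτ j
end

section
/- Let K be a complete non-Archimedean field and let f(z) = Σ_{n≥0} c_n z^n be a power series converging on the closed ball B_r(0) (i.e. |c_n| r^n → 0) with f(B_r(0)) ⊆ B_s(b) for some b ∈ K, s > 0, and such that sup_n |c_n| r^n over n ≥ 1 equals s (so that the image is exactly a ball of radius s). Then for all x, y ∈ B_r(0): |f(x) - f(y)| ≤ (s/r)·|x - y|. -/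
/-!
Termwise, `c_n (x^n - y^n) = c_n (x - y) ∑_{k<n} x^k y^(n-1-k)`, and by the ultrametric inequality
the geometric sum has norm at most `r^(n-1)`, so each term has norm at most
`(|c_n| r^n / r) |x - y| ≤ (s / r) |x - y|`. The ultrametric inequality for convergent series then
passes this uniform bound on the terms to `f(x) - f(y)`.
-/

open Filter Topology

namespace IsUltrametricDist

variable {K : Type*} [NormedField K] [IsUltrametricDist K]

theorem norm_pow_succ_sub_pow_succ_le {x y : K} {r : ℝ} (hx : ‖x‖ ≤ r) (hy : ‖y‖ ≤ r) (n : ℕ) :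
    ‖x ^ (n + 1) - y ^ (n + 1)‖ ≤ r ^ n * ‖x - y‖ := by
  have hr : 0 ≤ r := (norm_nonneg x).trans hx
  rw [← geom_sum₂_mul, norm_mul]
  gcongr
  refine norm_sum_le_of_forall_le_of_nonempty Finset.nonempty_range_add_one fun i hi => ?_
  have hin : i ≤ n := Nat.lt_succ_iff.mp (Finset.mem_range.mp hi)
  calc ‖x ^ i * y ^ (n + 1 - 1 - i)‖ = ‖x‖ ^ i * ‖y‖ ^ (n - i) := by
        rw [norm_mul, norm_pow, norm_pow, Nat.add_sub_cancel]
    _ ≤ r ^ i * r ^ (n - i) := by gcongr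
    _ = r ^ n := by rw [← pow_add, Nat.add_sub_cancel' hin]

variable [CompleteSpace K]

theorem summable_mul_pow_of_tendsto {c : ℕ → K} {r : ℝ}
    (hc : Tendsto (fun n => ‖c n‖ * r ^ n) atTop (𝓝 0)) {z : K} (hz : ‖z‖ ≤ r) :
    Summable fun n => c n * z ^ n := by
  refine NonarchimedeanAddGroup.summable_of_tendsto_cofinite_zero ?_
  rw [Nat.cofinite_eq_atTop, tendsto_zero_iff_norm_tendsto_zero]
  refine squeeze_zero (fun n => norm_nonneg _) (fun n => ?_) hc
  rw [norm_mul, norm_pow]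
  gcongr

theorem norm_tsum_mul_pow_sub_le {c : ℕ → K} {r s : ℝ} (hr : 0 < r)
    (hc : Tendsto (fun n => ‖c n‖ * r ^ n) atTop (𝓝 0))
    (hcs : ∀ n, ‖c (n + 1)‖ * r ^ (n + 1) ≤ s) {x y : K} (hx : ‖x‖ ≤ r) (hy : ‖y‖ ≤ r) :
    ‖(∑' n, c n * x ^ n) - ∑' n, c n * y ^ n‖ ≤ s / r * ‖x - y‖ := by
  have hs : 0 ≤ s := (mul_nonneg (norm_nonneg _) (pow_nonneg hr.le _)).trans (hcs 0)
  rw [← (summable_mul_pow_of_tendsto hc hx).tsum_sub (summable_mul_pow_of_tendsto hc hy)]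
  refine norm_tsum_le_of_forall_le_of_nonneg (by positivity) fun n => ?_
  cases n with
  | zero => simp only [pow_zero, mul_one, sub_self, norm_zero]; positivity
  | succ n =>
    calc ‖c (n + 1) * x ^ (n + 1) - c (n + 1) * y ^ (n + 1)‖
        = ‖c (n + 1)‖ * ‖x ^ (n + 1) - y ^ (n + 1)‖ := by rw [← mul_sub, norm_mul]
      _ ≤ ‖c (n + 1)‖ * (r ^ n * ‖x - y‖) := by
        gcongr
        exact norm_pow_succ_sub_pow_succ_le hx hy n
      _ = ‖c (n + 1)‖ * r ^ (n + 1) / r * ‖x - y‖ := by field_simp; ring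
      _ ≤ s / r * ‖x - y‖ := by gcongr; exact hcs n

end IsUltrametricDist

theorem stmt9_general {K : Type*} [NontriviallyNormedField K] [CompleteSpace K]
    [IsUltrametricDist K] (r s : ℝ) (hr : 0 < r)
    (c : ℕ → K)
    (hconv : Filter.Tendsto (fun n => ‖c n‖ * r ^ n) Filter.atTop (nhds 0))
    (hsup : IsLUB {u : ℝ | ∃ n : ℕ, 1 ≤ n ∧ u = ‖c n‖ * r ^ n} s) :
    ∀ x y : K, ‖x‖ ≤ r → ‖y‖ ≤ r →
      ‖(∑' n, c n * x ^ n) - ∑' n, c n * y ^ n‖ ≤ (s / r) * ‖x - y‖ := by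
  intro x y hx hy
  exact IsUltrametricDist.norm_tsum_mul_pow_sub_le hr hconv
    (fun n => hsup.1 ⟨n + 1, Nat.le_add_left 1 n, rfl⟩) hx hy

/-- Proposition 3.20 of Benedetto: a power series mapping `B_r(0)` into a ball
of radius `s`, with `sup_{n ≥ 1} |c_n| r^n = s`, satisfies the Lipschitz bound
`|f(x) - f(y)| ≤ (s/r)|x - y|` on `B_r(0)`. -/
theorem stmt9 {K : Type*} [NontriviallyNormedField K] [CompleteSpace K]
    [IsUltrametricDist K] (r s : ℝ) (hr : 0 < r) (hs : 0 < s) (b : K)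
    (c : ℕ → K)
    (hconv : Filter.Tendsto (fun n => ‖c n‖ * r ^ n) Filter.atTop (nhds 0))
    (hmap : ∀ x : K, ‖x‖ ≤ r → ‖(∑' n, c n * x ^ n) - b‖ ≤ s)
    (hsup : IsLUB {u : ℝ | ∃ n : ℕ, 1 ≤ n ∧ u = ‖c n‖ * r ^ n} s) :
    ∀ x y : K, ‖x‖ ≤ r → ‖y‖ ≤ r →
      ‖(∑' n, c n * x ^ n) - ∑' n, c n * y ^ n‖ ≤ (s / r) * ‖x - y‖ :=
  stmt9_general r s hr c hconv hsup
end
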